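/- Consider the two-player game Φ in which each player (Underdog U and Top Dog T) has action set {10,15,20} and payoffs (u_U, u_T) are: (10,10)↦(10,30), (10,15)↦(15,25), (10,20)↦(20,20), (15,10)↦(5,15), (15,15)↦(15,25), (15,20)↦(20,20), (20,10)↦(0,20), (20,15)↦(0,20), (20,20)↦(20,20), where the first coordinate is U's action. Then a strategy profile σ is an empirical equilibrium of Φ if and only if either (i) both U and T play 10 with probability one, or (ii) T plays 15 with probability one and U mixes only between 10 and 15, playing 15 with a probability in the interval [1/3, 1/2]. -/
import Mathlib


open Filter Topology

section GameDefs

variable {N : Type} [Fintype N] [DecidableEq N] {A : N → Type}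
  [∀ i, Fintype (A i)] [∀ i, DecidableEq (A i)]

/-- A mixed-strategy profile: each `σ i` is a probability distribution on `A i`. -/
def IsStrategy (σ : ∀ i, A i → ℝ) : Prop :=
  (∀ i a, 0 ≤ σ i a) ∧ ∀ i, ∑ a, σ i a = 1

/-- An interior profile places positive probability on every action. -/
def Interior (σ : ∀ i, A i → ℝ) : Prop :=
  ∀ i a, 0 < σ i a

/-- Expected utility of player `i` at profile `σ`. -/
noncomputable def expUtil (u : ∀ i : N, (∀ j, A j) → ℝ) (σ : ∀ i, A i → ℝ) (i : N) : ℝ :=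
  ∑ a : ∀ j, A j, u i a * ∏ j, σ j (a j)

/-- Expected utility of player `i` from playing action `ai` against `σ₋ᵢ`. -/
noncomputable def devUtil (u : ∀ i : N, (∀ j, A j) → ℝ) (σ : ∀ i, A i → ℝ)
    (i : N) (ai : A i) : ℝ :=
  expUtil u (Function.update σ i (fun b => if b = ai then (1 : ℝ) else 0)) i

/-- Nash equilibrium. -/
def IsNash (u : ∀ i : N, (∀ j, A j) → ℝ) (σ : ∀ i, A i → ℝ) : Prop :=
  IsStrategy σ ∧ ∀ (i : N) (μ : A i → ℝ), (∀ a, 0 ≤ μ a) → (∑ a, μ a = 1) →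
    expUtil u (Function.update σ i μ) i ≤ expUtil u σ i

/-- Weak payoff monotonicity: differences in behavior reveal differences in payoffs. -/
def WeaklyPayoffMonotone (u : ∀ i : N, (∀ j, A j) → ℝ) (σ : ∀ i, A i → ℝ) : Prop :=
  IsStrategy σ ∧ ∀ (i : N) (ai bi : A i), σ i bi < σ i ai →
    devUtil u σ i bi < devUtil u σ i ai

/-- Payoff monotonicity. -/
def PayoffMonotone (u : ∀ i : N, (∀ j, A j) → ℝ) (σ : ∀ i, A i → ℝ) : Prop :=
  IsStrategy σ ∧ ∀ (i : N) (ai bi : A i),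
    σ i bi ≤ σ i ai ↔ devUtil u σ i bi ≤ devUtil u σ i ai

/-- Pointwise convergence of a sequence of profiles. -/
def ConvergesTo (s : ℕ → ∀ i, A i → ℝ) (σ : ∀ i, A i → ℝ) : Prop :=
  ∀ (i : N) (ai : A i), Tendsto (fun n => s n i ai) atTop (𝓝 (σ i ai))

/-- Empirical equilibrium: a Nash equilibrium that is the limit of weakly payoff
monotone profiles. -/
def IsEmpirical (u : ∀ i : N, (∀ j, A j) → ℝ) (σ : ∀ i, A i → ℝ) : Prop :=
  IsNash u σ ∧ ∃ s : ℕ → ∀ i, A i → ℝ,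
    (∀ n, WeaklyPayoffMonotone u (s n)) ∧ ConvergesTo s σ

/-- Proper equilibrium (Myerson). -/
def IsProper (u : ∀ i : N, (∀ j, A j) → ℝ) (σ : ∀ i, A i → ℝ) : Prop :=
  IsStrategy σ ∧ ∃ s : ℕ → ∀ i, A i → ℝ,
    (∀ n, IsStrategy (s n) ∧ Interior (s n) ∧
      ∀ (i : N) (ai bi : A i),
        devUtil u (s n) i bi < devUtil u (s n) i ai →
          s n i bi ≤ (1 / (n + 1) : ℝ) * s n i ai) ∧
    ConvergesTo s σ

/-- Perfect equilibrium (Selten, in Myerson's formulation). -/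
def IsPerfect (u : ∀ i : N, (∀ j, A j) → ℝ) (σ : ∀ i, A i → ℝ) : Prop :=
  IsStrategy σ ∧ ∃ s : ℕ → ∀ i, A i → ℝ,
    (∀ n, IsStrategy (s n) ∧ Interior (s n) ∧
      ∀ (i : N) (ai : A i), (1 / (n + 1) : ℝ) < s n i ai →
        ∀ bi : A i, devUtil u (s n) i bi ≤ devUtil u (s n) i ai) ∧
    ConvergesTo s σ

/-- `bi` weakly dominates `ai` for player `i`. -/
def WeaklyDominates (u : ∀ i : N, (∀ j, A j) → ℝ) (i : N) (bi ai : A i) : Prop :=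
  (∀ a : ∀ j, A j, u i (Function.update a i ai) ≤ u i (Function.update a i bi)) ∧
  ∃ a : ∀ j, A j, u i (Function.update a i ai) < u i (Function.update a i bi)

/-- Undominated Nash equilibrium. -/
def IsUndominatedNash (u : ∀ i : N, (∀ j, A j) → ℝ) (σ : ∀ i, A i → ℝ) : Prop :=
  IsNash u σ ∧ ∀ (i : N) (ai : A i), 0 < σ i ai →
    ¬ ∃ bi : A i, WeaklyDominates u i bi ai

end GameDefs

/-- A regular quantal response function on a finite set of actions `B`:
interiority, continuity, responsiveness, and monotonicity. -/
def IsRegularQRF {B : Type} [Fintype B] [DecidableEq B]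
    (p : (B → ℝ) → (B → ℝ)) : Prop :=
  (∀ x, (∀ a, 0 < p x a) ∧ ∑ a, p x a = 1) ∧
  Continuous p ∧
  (∀ (x : B → ℝ) (η : ℝ) (a : B), 0 < η →
    p x a < p (Function.update x a (x a + η)) a) ∧
  ∀ (x : B → ℝ) (a b : B), x b < x a → p x b < p x a

section QREDefs

variable {N : Type} [Fintype N] [DecidableEq N] {A : N → Type}
  [∀ i, Fintype (A i)] [∀ i, DecidableEq (A i)]

/-- Quantal response equilibrium with respect to a profile of QRFs `p`. -/
def IsQRE (u : ∀ i : N, (∀ j, A j) → ℝ) (p : ∀ i, (A i → ℝ) → (A i → ℝ))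
    (σ : ∀ i, A i → ℝ) : Prop :=
  ∀ i : N, σ i = p i (fun ai => devUtil u σ i ai)

/-- A sequence of profiles of QRFs is utility maximizing in the limit. -/
def UtilityMaximizingInLimit (u : ∀ i : N, (∀ j, A j) → ℝ)
    (p : ℕ → ∀ i, (A i → ℝ) → (A i → ℝ)) : Prop :=
  ∀ (s : ℕ → ∀ i, A i → ℝ) (σ : ∀ i, A i → ℝ),
    (∀ n, IsQRE u (p n) (s n)) → ConvergesTo s σ → IsNash u σ

/-- `σ` is approachable by regular QRE that are utility maximizing in the limit. -/
def ApproachableByRegularQRE (u : ∀ i : N, (∀ j, A j) → ℝ) (σ : ∀ i, A i → ℝ) : Prop :=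
  ∃ p : ℕ → ∀ i, (A i → ℝ) → (A i → ℝ),
    (∀ n i, IsRegularQRF (p n i)) ∧ UtilityMaximizingInLimit u p ∧
    ∃ s : ℕ → ∀ i, A i → ℝ, (∀ n, IsQRE u (p n) (s n)) ∧ ConvergesTo s σ

end QREDefs

/-- A control cost function (van Damme), bundled with its derivative on `(0,1]`. -/
structure ControlCost where
  f : ℝ → ℝ
  f' : ℝ → ℝ
  hasDeriv : ∀ x ∈ Set.Ioc (0:ℝ) 1, HasDerivWithinAt f (f' x) (Set.Ioc (0:ℝ) 1) x
  contDeriv : ContinuousOn f' (Set.Ioc (0:ℝ) 1)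
  anti : StrictAntiOn f (Set.Ioc (0:ℝ) 1)
  convex : StrictConvexOn ℝ (Set.Ioc (0:ℝ) 1) f
  atOne : f 1 = 0
  blowup : Tendsto f (nhdsWithin 0 (Set.Ioi (0:ℝ))) atTop

/-- The game Φ (Table 4). Player `0` is Underdog, player `1` is Top Dog; actions
`0 = bid 10`, `1 = bid 15`, `2 = bid 20`. -/
noncomputable def uPhi : ∀ _ : Fin 2, (Fin 2 → Fin 3) → ℝ := fun i a =>
  if i = 0 then
    ![![(10:ℝ), 15, 20], ![5, 15, 20], ![0, 0, 20]] (a 0) (a 1)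
  else
    ![![(30:ℝ), 25, 20], ![15, 25, 20], ![20, 20, 20]] (a 0) (a 1)


section Aux

lemma expUtil0 (σ : ∀ _ : Fin 2, Fin 3 → ℝ) :
    expUtil uPhi σ 0 =
      σ 0 0 * (10*σ 1 0 + 15*σ 1 1 + 20*σ 1 2)
      + σ 0 1 * (5*σ 1 0 + 15*σ 1 1 + 20*σ 1 2)
      + σ 0 2 * (20*σ 1 2) := by
  rw [expUtil, ← Equiv.sum_comp (piFinTwoEquiv fun _ => Fin 3).symm
    (fun a => uPhi 0 a * ∏ j, σ j (a j))]
  simp [Fintype.sum_prod_type, Fin.sum_univ_three, Fin.prod_univ_two, uPhi]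
  ring

lemma expUtil1 (σ : ∀ _ : Fin 2, Fin 3 → ℝ) :
    expUtil uPhi σ 1 =
      σ 1 0 * (30*σ 0 0 + 15*σ 0 1 + 20*σ 0 2)
      + σ 1 1 * (25*σ 0 0 + 25*σ 0 1 + 20*σ 0 2)
      + σ 1 2 * (20*σ 0 0 + 20*σ 0 1 + 20*σ 0 2) := by
  rw [expUtil, ← Equiv.sum_comp (piFinTwoEquiv fun _ => Fin 3).symm
    (fun a => uPhi 1 a * ∏ j, σ j (a j))]
  simp [Fintype.sum_prod_type, Fin.sum_univ_three, Fin.prod_univ_two, uPhi]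
  ring

lemma expUtil_up0 (σ : ∀ _ : Fin 2, Fin 3 → ℝ) (μ : Fin 3 → ℝ) :
    expUtil uPhi (Function.update σ 0 μ) 0 =
      μ 0 * (10*σ 1 0 + 15*σ 1 1 + 20*σ 1 2)
      + μ 1 * (5*σ 1 0 + 15*σ 1 1 + 20*σ 1 2)
      + μ 2 * (20*σ 1 2) := by
  rw [expUtil0]; simp [Function.update]

lemma expUtil_up1 (σ : ∀ _ : Fin 2, Fin 3 → ℝ) (μ : Fin 3 → ℝ) :
    expUtil uPhi (Function.update σ 1 μ) 1 =
      μ 0 * (30*σ 0 0 + 15*σ 0 1 + 20*σ 0 2)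
      + μ 1 * (25*σ 0 0 + 25*σ 0 1 + 20*σ 0 2)
      + μ 2 * (20*σ 0 0 + 20*σ 0 1 + 20*σ 0 2) := by
  rw [expUtil1]; simp [Function.update]

lemma dev00 (σ : ∀ _ : Fin 2, Fin 3 → ℝ) :
    devUtil uPhi σ 0 0 = 10*σ 1 0 + 15*σ 1 1 + 20*σ 1 2 := by
  rw [devUtil, expUtil_up0]; norm_num [Fin.ext_iff]

lemma dev01 (σ : ∀ _ : Fin 2, Fin 3 → ℝ) :
    devUtil uPhi σ 0 1 = 5*σ 1 0 + 15*σ 1 1 + 20*σ 1 2 := by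
  rw [devUtil, expUtil_up0]; norm_num [Fin.ext_iff]

lemma dev02 (σ : ∀ _ : Fin 2, Fin 3 → ℝ) :
    devUtil uPhi σ 0 2 = 20*σ 1 2 := by
  rw [devUtil, expUtil_up0]; norm_num [Fin.ext_iff]

lemma dev10 (σ : ∀ _ : Fin 2, Fin 3 → ℝ) :
    devUtil uPhi σ 1 0 = 30*σ 0 0 + 15*σ 0 1 + 20*σ 0 2 := by
  rw [devUtil, expUtil_up1]; norm_num [Fin.ext_iff]

lemma dev11 (σ : ∀ _ : Fin 2, Fin 3 → ℝ) :
    devUtil uPhi σ 1 1 = 25*σ 0 0 + 25*σ 0 1 + 20*σ 0 2 := by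
  rw [devUtil, expUtil_up1]; norm_num [Fin.ext_iff]

lemma dev12 (σ : ∀ _ : Fin 2, Fin 3 → ℝ) :
    devUtil uPhi σ 1 2 = 20*σ 0 0 + 20*σ 0 1 + 20*σ 0 2 := by
  rw [devUtil, expUtil_up1]; norm_num [Fin.ext_iff]

end Aux

lemma fin2cases : ∀ i : Fin 2, i = 0 ∨ i = 1 := by decide
lemma fin3cases : ∀ a : Fin 3, a = 0 ∨ a = 1 ∨ a = 2 := by decide

lemma wpm1 (e : ℝ) (he1 : 0 < e) (he2 : e ≤ 1/100) :
    WeaklyPayoffMonotone uPhi ![![1-3*e, 2*e, e], ![1-3*e, 2*e, e]] := by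
  refine ⟨⟨?_, ?_⟩, ?_⟩
  · intro i a
    rcases fin2cases i with rfl | rfl <;> rcases fin3cases a with rfl | rfl | rfl <;>
      (simp; try linarith)
  · intro i
    rcases fin2cases i with rfl | rfl <;> (simp [Fin.sum_univ_three]; try ring)
  · intro i ai bi hlt
    rcases fin2cases i with rfl | rfl <;>
      rcases fin3cases ai with rfl | rfl | rfl <;>
      rcases fin3cases bi with rfl | rfl | rfl <;>
      (simp [dev00, dev01, dev02, dev10, dev11, dev12] at hlt ⊢; try linarith)

lemma wpm2 (t e : ℝ) (he1 : 0 < e) (he2 : e ≤ 1/100)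
    (ht1 : 1/3 + e ≤ t) (ht2 : t ≤ 1/2) :
    WeaklyPayoffMonotone uPhi ![![1-t, t, 0], ![2*e, 1-3*e, e]] := by
  refine ⟨⟨?_, ?_⟩, ?_⟩
  · intro i a
    rcases fin2cases i with rfl | rfl <;> rcases fin3cases a with rfl | rfl | rfl <;>
      (simp; try linarith)
  · intro i
    rcases fin2cases i with rfl | rfl <;> (simp [Fin.sum_univ_three]; try ring)
  · intro i ai bi hlt
    rcases fin2cases i with rfl | rfl <;>
      rcases fin3cases ai with rfl | rfl | rfl <;>
      rcases fin3cases bi with rfl | rfl | rfl <;>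
      (simp [dev00, dev01, dev02, dev10, dev11, dev12] at hlt ⊢; try linarith)

set_option maxHeartbeats 2000000

/-- σ is an empirical equilibrium of Φ iff either both players bid 10
with certainty, or Top Dog bids 15 with certainty and Underdog mixes only between 10
and 15, bidding 15 with probability in [1/3, 1/2]. -/
theorem phi_empirical_characterization (σ : ∀ _ : Fin 2, Fin 3 → ℝ)
    (hσ : IsStrategy σ) :
    IsEmpirical uPhi σ ↔
      ((σ 0 0 = 1 ∧ σ 1 0 = 1) ∨
        (σ 1 1 = 1 ∧ σ 0 2 = 0 ∧ 1 / 3 ≤ σ 0 1 ∧ σ 0 1 ≤ 1 / 2)) := by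
  obtain ⟨hnn, hsumf⟩ := hσ
  have hp : σ 0 0 + σ 0 1 + σ 0 2 = 1 := by simpa [Fin.sum_univ_three] using hsumf 0
  have hq : σ 1 0 + σ 1 1 + σ 1 2 = 1 := by simpa [Fin.sum_univ_three] using hsumf 1
  constructor
  · rintro ⟨⟨hstr, hnash⟩, s, hwpm, hconv⟩
    have hind : ∀ (k : Fin 3), (∀ a : Fin 3, (0:ℝ) ≤ if a = k then 1 else 0) ∧
        (∑ a : Fin 3, (if a = k then (1:ℝ) else 0)) = 1 := by
      intro k
      refine ⟨fun a => by split <;> norm_num, by simp⟩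
    have hd0 : ∀ a : Fin 3, devUtil uPhi σ 0 a ≤ expUtil uPhi σ 0 := fun a =>
      hnash 0 _ (hind a).1 (hind a).2
    have hd1 : ∀ a : Fin 3, devUtil uPhi σ 1 a ≤ expUtil uPhi σ 1 := fun a =>
      hnash 1 _ (hind a).1 (hind a).2
    have H00 := hd0 0
    have H11 := hd1 1
    have H10 := hd1 0
    rw [dev00, expUtil0] at H00
    rw [dev11, expUtil1] at H11
    rw [dev10, expUtil1] at H10
    have hA : (σ 0 0 + σ 0 1 + σ 0 2) * (10*σ 1 0 + 15*σ 1 1 + 20*σ 1 2)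
        = (10*σ 1 0 + 15*σ 1 1 + 20*σ 1 2) := by rw [hp]; ring
    have key : 5*(σ 0 1*σ 1 0) + 10*(σ 0 2*σ 1 0) + 15*(σ 0 2*σ 1 1) ≤ 0 := by
      nlinarith [H00, hA]
    have z1 : σ 0 1 * σ 1 0 = 0 := le_antisymm
      (by nlinarith [key, mul_nonneg (hnn 0 2) (hnn 1 0), mul_nonneg (hnn 0 2) (hnn 1 1)])
      (mul_nonneg (hnn 0 1) (hnn 1 0))
    have z2 : σ 0 2 * σ 1 0 = 0 := le_antisymm
      (by nlinarith [key, mul_nonneg (hnn 0 1) (hnn 1 0), mul_nonneg (hnn 0 2) (hnn 1 1)])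
      (mul_nonneg (hnn 0 2) (hnn 1 0))
    have z3 : σ 0 2 * σ 1 1 = 0 := le_antisymm
      (by nlinarith [key, mul_nonneg (hnn 0 1) (hnn 1 0), mul_nonneg (hnn 0 2) (hnn 1 0)])
      (mul_nonneg (hnn 0 2) (hnn 1 1))
    rcases eq_or_lt_of_le (hnn 1 0) with hq0 | hq0
    · -- σ 1 0 = 0
      rcases eq_or_lt_of_le (hnn 1 1) with hq1 | hq1
      · -- σ 1 1 = 0, so σ 1 2 = 1 : show impossible
        exfalso
        have hq2 : σ 1 2 = 1 := by linarith
        -- Nash forces σ 0 = (0,0,1)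
        rw [← hq0, ← hq1, hq2] at H11
        have hp0 : σ 0 0 = 0 := by nlinarith [H11, hnn 0 0, hnn 0 1]
        have hp1 : σ 0 1 = 0 := by nlinarith [H11, hnn 0 0, hnn 0 1]
        have hp2 : σ 0 2 = 1 := by linarith
        have h0lt : σ 0 0 < 1/2 := by rw [hp0]; norm_num
        have h2gt : (1:ℝ)/2 < σ 0 2 := by rw [hp2]; norm_num
        have ev0 := (hconv 0 0).eventually (eventually_lt_nhds h0lt)
        have ev2 := (hconv 0 2).eventually (eventually_gt_nhds h2gt)
        obtain ⟨n, h0n, h2n⟩ := (ev0.and ev2).exists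
        have hmono := (hwpm n).2 0 2 0 (by linarith)
        rw [dev00, dev02] at hmono
        have q0n := (hwpm n).1.1 1 0
        have q1n := (hwpm n).1.1 1 1
        linarith
      · -- σ 1 1 > 0 : right branch
        have hp2 : σ 0 2 = 0 := le_antisymm (by nlinarith [z3, hq1]) (hnn 0 2)
        rw [← hq0, hp2] at H11
        have hq2 : σ 1 2 = 0 := by nlinarith [H11, hnn 1 2, hq]
        have hq1v : σ 1 1 = 1 := by linarith
        rw [← hq0, hq1v, hq2, hp2] at H10
        have hge : 1/3 ≤ σ 0 1 := by linarith [H10, hp]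
        refine Or.inr ⟨hq1v, hp2, hge, ?_⟩
        by_contra hgt
        push_neg at hgt
        have h00lt : σ 0 0 < 1/2 := by linarith
        have ev1 := (hconv 0 1).eventually (eventually_gt_nhds hgt)
        have ev0 := (hconv 0 0).eventually (eventually_lt_nhds h00lt)
        obtain ⟨n, h1n, h0n⟩ := (ev1.and ev0).exists
        have hmono := (hwpm n).2 0 1 0 (by linarith)
        rw [dev00, dev01] at hmono
        have q0n := (hwpm n).1.1 1 0
        linarith
    · -- σ 1 0 > 0 : left branch
      have hp1 : σ 0 1 = 0 := le_antisymm (by nlinarith [z1, hq0]) (hnn 0 1)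
      have hp2 : σ 0 2 = 0 := le_antisymm (by nlinarith [z2, hq0]) (hnn 0 2)
      have hp0 : σ 0 0 = 1 := by linarith
      rw [hp0, hp1, hp2] at H10
      have hq1 : σ 1 1 = 0 := by nlinarith [H10, hnn 1 1, hnn 1 2, hq]
      have hq2 : σ 1 2 = 0 := by nlinarith [H10, hnn 1 1, hnn 1 2, hq]
      exact Or.inl ⟨hp0, by linarith⟩
  · -- backward direction
    have heps : ∀ n : ℕ, 0 < ((n:ℝ)+100)⁻¹ ∧ ((n:ℝ)+100)⁻¹ ≤ 1/100 := by
      intro n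
      have hn : (0:ℝ) ≤ (n:ℝ) := Nat.cast_nonneg n
      have h100 : (100:ℝ) ≤ (n:ℝ)+100 := by linarith
      refine ⟨by positivity, ?_⟩
      have := inv_anti₀ (by norm_num : (0:ℝ) < 100) h100
      linarith [this]
    have heps0 : Tendsto (fun n : ℕ => ((n:ℝ)+100)⁻¹) atTop (𝓝 0) :=
      Tendsto.inv_tendsto_atTop
        (tendsto_atTop_add_const_right atTop 100 tendsto_natCast_atTop_atTop)
    rintro (⟨h00, h10⟩ | ⟨h11, h02, h13l, h13r⟩)
    · have h01 : σ 0 1 = 0 := by linarith [hnn 0 1, hnn 0 2]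
      have h02 : σ 0 2 = 0 := by linarith [hnn 0 1, hnn 0 2]
      have h11 : σ 1 1 = 0 := by linarith [hnn 1 1, hnn 1 2]
      have h12 : σ 1 2 = 0 := by linarith [hnn 1 1, hnn 1 2]
      constructor
      · refine ⟨⟨hnn, hsumf⟩, ?_⟩
        intro i μ hμn hμs
        have hs3 : μ 0 + μ 1 + μ 2 = 1 := by simpa [Fin.sum_univ_three] using hμs
        rcases fin2cases i with rfl | rfl
        · rw [expUtil_up0, expUtil0, h00, h01, h02, h10, h11, h12]
          have := hμn 0; have := hμn 1; have := hμn 2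
          nlinarith
        · rw [expUtil_up1, expUtil1, h00, h01, h02, h10, h11, h12]
          have := hμn 0; have := hμn 1; have := hμn 2
          nlinarith
      · refine ⟨fun n => ![![1-3*((n:ℝ)+100)⁻¹, 2*((n:ℝ)+100)⁻¹, ((n:ℝ)+100)⁻¹],
          ![1-3*((n:ℝ)+100)⁻¹, 2*((n:ℝ)+100)⁻¹, ((n:ℝ)+100)⁻¹]], ?_, ?_⟩
        · intro n
          exact wpm1 _ (heps n).1 (heps n).2
        · intro i ai
          rcases fin2cases i with rfl | rfl <;> rcases fin3cases ai with rfl | rfl | rfl <;>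
            simp only [Matrix.cons_val_zero, Matrix.cons_val_one, Matrix.head_cons,
              Matrix.cons_val_two, Matrix.tail_cons]
          · rw [h00]
            simpa using tendsto_const_nhds.sub (heps0.const_mul 3)
          · rw [h01]
            simpa using heps0.const_mul 2
          · rw [h02]; simpa using heps0
          · rw [h10]
            simpa using tendsto_const_nhds.sub (heps0.const_mul 3)
          · rw [h11]
            simpa using heps0.const_mul 2
          · rw [h12]; simpa using heps0
    · -- case (ii)
      have h10 : σ 1 0 = 0 := by linarith [hnn 1 0, hnn 1 2]
      have h12 : σ 1 2 = 0 := by linarith [hnn 1 0, hnn 1 2]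
      have h00 : σ 0 0 = 1 - σ 0 1 := by linarith
      constructor
      · refine ⟨⟨hnn, hsumf⟩, ?_⟩
        intro i μ hμn hμs
        have hs3 : μ 0 + μ 1 + μ 2 = 1 := by simpa [Fin.sum_univ_three] using hμs
        rcases fin2cases i with rfl | rfl
        · rw [expUtil_up0, expUtil0, h10, h11, h12, h02]
          have := hμn 0; have := hμn 1; have := hμn 2
          nlinarith
        · rw [expUtil_up1, expUtil1, h10, h11, h12, h02, h00]
          have := hμn 1; have := hμn 2
          nlinarith [mul_nonneg (hμn 0) (show (0:ℝ) ≤ σ 0 1 - 1/3 by linarith)]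
      · refine ⟨fun n => ![![1 - max (σ 0 1) (1/3 + ((n:ℝ)+100)⁻¹),
            max (σ 0 1) (1/3 + ((n:ℝ)+100)⁻¹), 0],
          ![2*((n:ℝ)+100)⁻¹, 1-3*((n:ℝ)+100)⁻¹, ((n:ℝ)+100)⁻¹]], ?_, ?_⟩
        · intro n
          exact wpm2 _ _ (heps n).1 (heps n).2 (le_max_right _ _)
            (max_le h13r (by linarith [(heps n).2]))
        · have htt : Tendsto (fun n : ℕ => max (σ 0 1) (1/3 + ((n:ℝ)+100)⁻¹))
              atTop (𝓝 (σ 0 1)) := by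
            have h1 : Tendsto (fun n : ℕ => max (σ 0 1) (1/3 + ((n:ℝ)+100)⁻¹))
                atTop (𝓝 (max (σ 0 1) (1/3 + 0))) :=
              tendsto_const_nhds.max (tendsto_const_nhds.add heps0)
            rw [add_zero, max_eq_left h13l] at h1
            exact h1
          intro i ai
          rcases fin2cases i with rfl | rfl <;> rcases fin3cases ai with rfl | rfl | rfl <;>
            simp only [Matrix.cons_val_zero, Matrix.cons_val_one, Matrix.head_cons,
              Matrix.cons_val_two, Matrix.tail_cons]
          · rw [h00]
            exact tendsto_const_nhds.sub htt
          · exact htt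
          · rw [h02]; exact tendsto_const_nhds
          · rw [h10]
            simpa using heps0.const_mul 2
          · rw [h11]
            simpa using tendsto_const_nhds.sub (heps0.const_mul 3)
          · rw [h12]; simpa using heps0
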